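/- arXiv:2605.13252 — 5 statements merged into one kernel-verified Lean document; each statement's English description precedes it below -/
import Mathlib

section
/- For every δ ∈ (0, 1/4) and every real α ≥ 1, the binary Kullback–Leibler divergence satisfies kl(1 − 2δ, 2δ/α) ≥ (1/2) · log(α/(8δ)). -/
/-- Binary Kullback–Leibler divergence `kl(p,q)` (with `Real.log 0 = 0`,
so the convention `0·log 0 = 0` holds automatically). -/
noncomputable def klBin (p q : ℝ) : ℝ :=
  p * Real.log (p / q) + (1 - p) * Real.log ((1 - p) / (1 - q))

lemma chord_log_one_sub (t : ℝ) (h0 : 0 < t) (h1 : t < 1/2) :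
    -(2*t*Real.log 2) ≤ Real.log (1 - t) := by
  have h := (strictConcaveOn_log_Ioi.concaveOn).2 (show (1:ℝ) ∈ Set.Ioi (0:ℝ) by norm_num)
    (show (1/2:ℝ) ∈ Set.Ioi (0:ℝ) by norm_num)
    (show (0:ℝ) ≤ 1 - 2*t by linarith) (show (0:ℝ) ≤ 2*t by linarith)
    (show (1 - 2*t) + 2*t = 1 by ring)
  simp only [smul_eq_mul] at h
  have : (1 - 2*t) * 1 + 2*t * (1/2:ℝ) = 1 - t := by ring
  rw [this, Real.log_one] at h
  have h2 : Real.log (1/2 : ℝ) = -Real.log 2 := by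
    rw [one_div, Real.log_inv]
  rw [h2] at h
  nlinarith [h]

lemma chord_log_mid (t : ℝ) (h0 : (1:ℝ)/4 ≤ t) (h1 : t < 1/2) :
    (4*t - 3) * Real.log 2 ≤ Real.log t := by
  have h := (strictConcaveOn_log_Ioi.concaveOn).2 (show (1/4:ℝ) ∈ Set.Ioi (0:ℝ) by norm_num)
    (show (1/2:ℝ) ∈ Set.Ioi (0:ℝ) by norm_num)
    (show (0:ℝ) ≤ 2 - 4*t by linarith) (show (0:ℝ) ≤ 4*t - 1 by linarith)
    (show (2 - 4*t) + (4*t - 1) = 1 by ring)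
  simp only [smul_eq_mul] at h
  have e : (2 - 4*t) * ((1:ℝ)/4) + (4*t - 1) * (1/2) = t := by ring
  rw [e] at h
  have h2 : Real.log (1/2 : ℝ) = -Real.log 2 := by rw [one_div, Real.log_inv]
  have h4 : Real.log (1/4 : ℝ) = -(2 * Real.log 2) := by
    rw [one_div, Real.log_inv]
    have : (4:ℝ) = 2^2 := by norm_num
    rw [this, Real.log_pow]; push_cast; ring
  rw [h2, h4] at h
  nlinarith [h]

lemma f_nonneg (t : ℝ) (h0 : 0 < t) (h1 : t < 1/2) :
    0 ≤ (1 - t) * Real.log (1 - t) + (2*t - 1/2) * Real.log t + Real.log 2 := by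
  have hlog2 : 0 < Real.log 2 := Real.log_pos (by norm_num)
  have h1t : (0:ℝ) < 1 - t := by linarith
  have hA : -(2*t*Real.log 2) ≤ Real.log (1 - t) := chord_log_one_sub t h0 h1
  have hA' : -(2*t*(1-t)*Real.log 2) ≤ (1 - t) * Real.log (1 - t) := by
    nlinarith [hA, h1t.le]
  rcases le_or_gt t (1/4) with hc | hc
  · -- here 2t - 1/2 ≤ 0 and log t ≤ -2 log 2
    have hB : Real.log t ≤ -(2 * Real.log 2) := by
      have : Real.log t ≤ Real.log (1/4 : ℝ) := Real.log_le_log h0 (by linarith)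
      have h4 : Real.log (1/4 : ℝ) = -(2 * Real.log 2) := by
        rw [one_div, Real.log_inv]
        have : (4:ℝ) = 2^2 := by norm_num
        rw [this, Real.log_pow]; push_cast; ring
      linarith
    have hB' : (2*t - 1/2) * (-(2 * Real.log 2)) ≤ (2*t - 1/2) * Real.log t := by
      apply mul_le_mul_of_nonpos_left hB (by linarith)
    nlinarith [hA', hB', mul_nonneg (show (0:ℝ) ≤ 2*t^2 - 6*t + 2 by nlinarith) hlog2.le]
  · have hB : (4*t - 3) * Real.log 2 ≤ Real.log t := chord_log_mid t hc.le h1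
    have hB' : (2*t - 1/2) * ((4*t - 3) * Real.log 2) ≤ (2*t - 1/2) * Real.log t :=
      mul_le_mul_of_nonneg_left hB (by linarith)
    nlinarith [hA', hB', mul_nonneg (show (0:ℝ) ≤ 10*(t - 1/2)^2 by positivity) hlog2.le]

/-- for `δ ∈ (0,1/4)` and `α ≥ 1`,
`kl(1 − 2δ, 2δ/α) ≥ (1/2)·log(α/(8δ))`. -/
theorem stmt_1 (δ α : ℝ) (hδ : δ ∈ Set.Ioo (0:ℝ) (1/4)) (hα : 1 ≤ α) :
    (1/2) * Real.log (α / (8 * δ)) ≤ klBin (1 - 2 * δ) (2 * δ / α) := by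
  obtain ⟨hδ0, hδ1⟩ := hδ
  have ha0 : (0:ℝ) < α := by linarith
  have ht0 : 0 < 2*δ := by linarith
  have ht1 : 2*δ < 1/2 := by linarith
  have h1t : (0:ℝ) < 1 - 2*δ := by linarith
  have hta : 2*δ/α ≤ 2*δ := div_le_self ht0.le hα
  have hta0 : 0 < 2*δ/α := div_pos ht0 ha0
  have h1ta : 0 < 1 - 2*δ/α := by linarith
  unfold klBin
  have e2 : (1:ℝ) - (1 - 2*δ) = 2*δ := by ring
  rw [e2]
  -- decompose the first log
  have hlog1 : Real.log ((1 - 2*δ) / (2*δ/α)) =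
      Real.log (1 - 2*δ) - Real.log (2*δ) + Real.log α := by
    rw [Real.log_div h1t.ne' hta0.ne', Real.log_div ht0.ne' ha0.ne']
    ring
  -- the second log is at least log(2δ)
  have hlog2 : Real.log (2*δ) ≤ Real.log (2*δ / (1 - 2*δ/α)) := by
    apply Real.log_le_log ht0
    rw [le_div_iff₀ h1ta]
    nlinarith [hta0.le]
  -- the target log
  have hlog3 : Real.log (α / (8*δ)) =
      Real.log α - (2 * Real.log 2 + Real.log (2*δ)) := by
    rw [Real.log_div ha0.ne' (by linarith : (8:ℝ)*δ ≠ 0)]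
    have : (8:ℝ)*δ = 4 * (2*δ) := by ring
    rw [this, Real.log_mul (by norm_num) ht0.ne']
    have h4 : Real.log (4:ℝ) = 2 * Real.log 2 := by
      have : (4:ℝ) = 2^2 := by norm_num
      rw [this, Real.log_pow]; push_cast; ring
    rw [h4]
  have hlogα : 0 ≤ Real.log α := Real.log_nonneg hα
  have hf := f_nonneg (2*δ) ht0 ht1
  have hmul : 2*δ * Real.log (2*δ) ≤ 2*δ * Real.log (2*δ / (1 - 2*δ/α)) :=
    mul_le_mul_of_nonneg_left hlog2 ht0.le
  have hαterm : 0 ≤ (1/2 - 2*δ) * Real.log α :=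
    mul_nonneg (by linarith) hlogα
  rw [hlog1, hlog3]
  nlinarith [hf, hmul, hαterm]
end

section
/- Let m ≥ 1 and let 0 < x₁* < ⋯ < x_m* < 1 be real numbers, with spacings θ_i = x_{i+1}* − x_i* for 1 ≤ i ≤ m−1, θ₀ = θ_m = 1 by convention, and local spacings s_i = min(θ_{i−1}, θ_i). Let η′ > 0 and, for each i, set α_i = max(1, ⌊s_i/(8η′)⌋). Let J = (j₁, …, j_m) be integers with 0 ≤ j_i ≤ α_i − 1 for each i, and define the shifted positions x_i^J = x_i*/2 + 2η′·j_i. Then 0 < x₁^J < ⋯ < x_m^J < 1, and for every 1 ≤ i ≤ m−1 the shifted spacings satisfy θ_i/4 ≤ x_{i+1}^J − x_i^J ≤ (3/4)·θ_i. -/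
/-- shifted change-point positions `x_i^J = x_i*/2 + 2η'·j_i`
remain ordered in `(0,1)` and their spacings satisfy
`θ_i/4 ≤ x_{i+1}^J − x_i^J ≤ (3/4)·θ_i`. -/
theorem stmt_4 (m : ℕ) (hm : 1 ≤ m) (x : ℕ → ℝ)
    (hx0 : 0 < x 1) (hxm : x m < 1)
    (hmono : ∀ i ∈ Finset.Icc 1 (m - 1), x i < x (i + 1))
    (θ : ℕ → ℝ) (hθ0 : θ 0 = 1) (hθm : θ m = 1)
    (hθ : ∀ i ∈ Finset.Icc 1 (m - 1), θ i = x (i + 1) - x i)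
    (s : ℕ → ℝ) (hs : ∀ i ∈ Finset.Icc 1 m, s i = min (θ (i - 1)) (θ i))
    (η : ℝ) (hη : 0 < η)
    (α : ℕ → ℤ) (hα : ∀ i ∈ Finset.Icc 1 m, α i = max 1 ⌊s i / (8 * η)⌋)
    (j : ℕ → ℤ) (hj : ∀ i ∈ Finset.Icc 1 m, 0 ≤ j i ∧ j i ≤ α i - 1)
    (xJ : ℕ → ℝ) (hxJ : ∀ i ∈ Finset.Icc 1 m, xJ i = x i / 2 + 2 * η * (j i : ℝ)) :
    (0 < xJ 1) ∧ (xJ m < 1) ∧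
    (∀ i ∈ Finset.Icc 1 (m - 1), xJ i < xJ (i + 1)) ∧
    (∀ i ∈ Finset.Icc 1 (m - 1),
      θ i / 4 ≤ xJ (i + 1) - xJ i ∧ xJ (i + 1) - xJ i ≤ (3/4) * θ i) := by
  have hθpos : ∀ i, i ≤ m → 0 < θ i := by
    intro i hi
    rcases Nat.eq_zero_or_pos i with h0 | h0
    · subst h0; rw [hθ0]; norm_num
    rcases eq_or_lt_of_le hi with rfl | h1
    · rw [hθm]; norm_num
    · have hmem : i ∈ Finset.Icc 1 (m - 1) := by
        simp only [Finset.mem_Icc]; omega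
      rw [hθ i hmem]
      have := hmono i hmem
      linarith
  have hspos : ∀ i ∈ Finset.Icc 1 m, 0 < s i := by
    intro i hi
    simp only [Finset.mem_Icc] at hi
    rw [hs i (by simp [Finset.mem_Icc]; omega)]
    exact lt_min (hθpos _ (by omega)) (hθpos _ (by omega))
  have key : ∀ i ∈ Finset.Icc 1 m,
      0 ≤ 2 * η * (j i : ℝ) ∧ 2 * η * (j i : ℝ) ≤ s i / 4 := by
    intro i hi
    obtain ⟨hj0, hj1⟩ := hj i hi
    have hjR0 : (0:ℝ) ≤ (j i : ℝ) := by exact_mod_cast hj0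
    refine ⟨mul_nonneg (by linarith) hjR0, ?_⟩
    rw [hα i hi] at hj1
    rcases le_or_gt (⌊s i / (8 * η)⌋) 1 with hf | hf
    · rw [max_eq_left hf] at hj1
      have : j i = 0 := by omega
      rw [this]
      have := hspos i hi
      push_cast
      linarith
    · rw [max_eq_right (le_of_lt hf)] at hj1
      have hjR : (j i : ℝ) ≤ (⌊s i / (8 * η)⌋ : ℝ) - 1 := by
        have : (j i : ℝ) ≤ ((⌊s i / (8 * η)⌋ - 1 : ℤ) : ℝ) := by exact_mod_cast hj1
        push_cast at this
        linarith
      have hfl : (⌊s i / (8 * η)⌋ : ℝ) ≤ s i / (8 * η) := Int.floor_le _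
      have h8 : (⌊s i / (8 * η)⌋ : ℝ) * (8 * η) ≤ s i :=
        (le_div_iff₀ (by linarith)).mp hfl
      have h2 := mul_le_mul_of_nonneg_left hjR (by linarith : (0:ℝ) ≤ 2 * η)
      nlinarith
  have hdiff : ∀ i ∈ Finset.Icc 1 (m - 1),
      θ i / 4 ≤ xJ (i + 1) - xJ i ∧ xJ (i + 1) - xJ i ≤ (3/4) * θ i := by
    intro i hi
    simp only [Finset.mem_Icc] at hi
    have him : i ∈ Finset.Icc 1 m := by simp [Finset.mem_Icc]; omega
    have hi1m : i + 1 ∈ Finset.Icc 1 m := by simp [Finset.mem_Icc]; omega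
    have hθi := hθ i (by simp [Finset.mem_Icc]; omega)
    have hsi : s i ≤ θ i := by
      rw [hs i him]; exact min_le_right _ _
    have hsi1 : s (i + 1) ≤ θ i := by
      rw [hs (i + 1) hi1m]
      simp only [Nat.add_sub_cancel]
      exact min_le_left _ _
    obtain ⟨hd0, hd1⟩ := key i him
    obtain ⟨hd0', hd1'⟩ := key (i + 1) hi1m
    rw [hxJ i him, hxJ (i + 1) hi1m]
    constructor <;> linarith
  refine ⟨?_, ?_, ?_, hdiff⟩
  · have h1m : 1 ∈ Finset.Icc 1 m := by simp [Finset.mem_Icc]; omega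
    obtain ⟨hd0, _⟩ := key 1 h1m
    rw [hxJ 1 h1m]
    linarith
  · have hmm : m ∈ Finset.Icc 1 m := by simp [Finset.mem_Icc]; omega
    obtain ⟨_, hd1⟩ := key m hmm
    have hsm : s m ≤ 1 := by
      rw [hs m hmm]
      calc min (θ (m - 1)) (θ m) ≤ θ m := min_le_right _ _
        _ = 1 := hθm
    rw [hxJ m hmm]
    linarith
  · intro i hi
    obtain ⟨h1, _⟩ := hdiff i hi
    simp only [Finset.mem_Icc] at hi
    have := hθpos i (by omega)
    linarith
end

section
/- Let δ ∈ (0, 1/4), let s ∈ (0, 1], let Δ be a real with 0 < |Δ| ≤ 1, and set ℰ² = s·Δ². Let T be a positive integer satisfying T ≥ 7.4·10⁵ · max(log(1/ℰ²), 1) · log( max(log(1/ℰ²), 1) / (s·δ) ) · (1/ℰ²). Define d_max = ⌊log₂(T / log(1/δ))⌋, d* = ⌈log₂(2/s)⌉, n = 2^{d*}, T_{d*} = ⌊T / (d_max·(n+1))⌋, and β = √( (8/T_{d*}) · log( 2·d_max·(n+1)/δ ) ). Then T_{d*} ≥ 1 and |Δ| ≥ 2β. -/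
private lemma log_add_le_aux {a x : ℝ} (ha : 0 < a) (hx : 0 ≤ x) :
    Real.log (a + x) ≤ Real.log a + x / a := by
  have hax : 0 < a + x := by linarith
  have h1 : Real.log ((a + x) / a) = Real.log (a + x) - Real.log a :=
    Real.log_div (ne_of_gt hax) (ne_of_gt ha)
  have h2 : Real.log ((a + x) / a) ≤ (a + x) / a - 1 :=
    Real.log_le_sub_one_of_pos (by positivity)
  have h3 : (a + x) / a - 1 = x / a := by field_simp; ring
  linarith [h1 ▸ h2, h3 ▸ h2]

private lemma quad_aux (τ C u : ℝ) (hτ : 13 ≤ τ) (hC : 900 ≤ C) (hu : 0 ≤ u) :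
    (τ + 2*u) * (C + 37*u) ≤ (6/5) * (τ * C) * (1+u)^2 := by
  nlinarith [mul_nonneg hu hu, mul_nonneg (mul_nonneg hu hu) (sub_nonneg.mpr hC),
    mul_nonneg (mul_nonneg hu hu) (sub_nonneg.mpr hτ),
    mul_nonneg (mul_nonneg hu (sub_nonneg.mpr hτ)) (sub_nonneg.mpr hC),
    mul_nonneg hu (sub_nonneg.mpr hτ), mul_nonneg hu (sub_nonneg.mpr hC)]

private lemma w0up_aux (L lam M : ℝ) (hL : 1 ≤ L) (hlam : 1.38 ≤ lam)
    (hM : M ≤ 2*L + lam) : (7.4e5:ℝ) * L * M ≤ 2097152 * L^2 * lam := by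
  have hL0 : (0:ℝ) ≤ L := by linarith
  have h1 : (7.4e5:ℝ)*L*M ≤ 7.4e5*L*(2*L+lam) := by
    have h := mul_le_mul_of_nonneg_left hM (by positivity : (0:ℝ) ≤ 7.4e5*L)
    calc (7.4e5:ℝ)*L*M = 7.4e5*L*M := rfl
      _ ≤ 7.4e5*L*(2*L+lam) := h
  have hA : 0 ≤ L*(L-1)*(lam-1.38) := by
    apply mul_nonneg (mul_nonneg hL0 (by linarith)) (by linarith)
  have hB : 0 ≤ L*(lam-1.38) := mul_nonneg hL0 (by linarith)
  have hC : 0 ≤ L*(L-1) := mul_nonneg hL0 (by linarith)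
  nlinarith [hA, hB, hC, hL0, hL]

set_option maxHeartbeats 2000000 in
/-- Lemma on detection budget: if the budget `T` is large enough
in terms of the energy `ℰ² = s·Δ²`, then the per-depth budget `T_{d*}` at the
natural depth `d* = ⌈log₂(2/s)⌉` is at least 1 and the jump exceeds twice the
Hoeffding threshold `β`. -/
theorem stmt_7 (δ s Δ : ℝ) (hδ : δ ∈ Set.Ioo (0:ℝ) (1/4)) (hs : s ∈ Set.Ioc (0:ℝ) 1)
    (hΔ0 : 0 < |Δ|) (hΔ1 : |Δ| ≤ 1)
    (E2 : ℝ) (hE2 : E2 = s * Δ ^ 2)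
    (T : ℕ) (hTpos : 0 < T)
    (hT : (7.4e5 : ℝ) * max (Real.log (1 / E2)) 1 *
      Real.log (max (Real.log (1 / E2)) 1 / (s * δ)) * (1 / E2) ≤ (T : ℝ))
    (dmax : ℤ) (hdmax : dmax = ⌊Real.logb 2 ((T : ℝ) / Real.log (1 / δ))⌋)
    (dstar : ℤ) (hdstar : dstar = ⌈Real.logb 2 (2 / s)⌉)
    (n : ℝ) (hn : n = (2 : ℝ) ^ dstar)
    (Tds : ℤ) (hTds : Tds = ⌊(T : ℝ) / ((dmax : ℝ) * (n + 1))⌋)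
    (β : ℝ) (hβ : β = Real.sqrt ((8 / (Tds : ℝ)) *
      Real.log (2 * (dmax : ℝ) * (n + 1) / δ))) :
    1 ≤ Tds ∧ 2 * β ≤ |Δ| := by
  obtain ⟨hδ0, hδ4⟩ := hδ
  obtain ⟨hs0, hs1⟩ := hs
  have hTR : (0:ℝ) < (T:ℝ) := by exact_mod_cast hTpos
  have hΔne : Δ ≠ 0 := by
    intro h; rw [h] at hΔ0; simp at hΔ0
  have hΔ2pos : 0 < Δ^2 := by positivity
  have hΔ2le : Δ^2 ≤ 1 := by
    nlinarith only [sq_abs Δ, abs_nonneg Δ, hΔ1]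
  have hE2pos : 0 < E2 := by rw [hE2]; positivity
  have hE2le1 : E2 ≤ 1 := by rw [hE2]; nlinarith only [hs1, hs0, hΔ2le, hΔ2pos]
  have hE2les : E2 ≤ s := by
    rw [hE2]
    nlinarith only [hs0, hΔ2le, hΔ2pos]
  -- names
  set lam := Real.log (1/δ) with hlamdef
  set sig := Real.log (1/s) with hsigdef
  set ell := Real.log (1/E2) with helldef
  set L := max ell 1 with hLdef
  set M := Real.log (L/(s*δ)) with hMdef
  clear_value lam sig ell L M
  -- log 2 numerics
  have hlog2a : (0.6931471803:ℝ) < Real.log 2 := Real.log_two_gt_d9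
  have hlog2b : Real.log 2 < 0.6931471808 := Real.log_two_lt_d9
  have hlog2pos : 0 < Real.log 2 := by linarith only [hlog2a]
  -- basic log bounds
  have hlam : (1.38:ℝ) ≤ lam := by
    have h4 : Real.log 4 ≤ lam := by
      rw [hlamdef]
      apply Real.log_le_log (by norm_num)
      rw [le_div_iff₀ hδ0]; linarith only [hδ4]
    have h5 : Real.log 4 = 2 * Real.log 2 := by
      rw [show (4:ℝ) = 2^(2:ℕ) by norm_num, Real.log_pow]; push_cast; ring
    linarith only [h4, h5, hlog2a]
  have hlampos : (0:ℝ) < lam := by linarith only [hlam]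
  have hsig0 : 0 ≤ sig := by
    rw [hsigdef]
    exact Real.log_nonneg (by rw [le_div_iff₀ hs0]; linarith only [hs1])
  have hellsig : sig ≤ ell := by
    rw [hsigdef, helldef]
    apply Real.log_le_log (by positivity)
    exact one_div_le_one_div_of_le hE2pos hE2les
  have hell0 : 0 ≤ ell := le_trans hsig0 hellsig
  have hL1 : (1:ℝ) ≤ L := by rw [hLdef]; exact le_max_right _ _
  have hLpos : (0:ℝ) < L := by linarith only [hL1]
  have hellL : ell ≤ L := by rw [hLdef]; exact le_max_left _ _
  have hsigL : sig ≤ L := le_trans hellsig hellL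
  have hlogL0 : 0 ≤ Real.log L := Real.log_nonneg hL1
  have hlogLL : Real.log L ≤ L - 1 := Real.log_le_sub_one_of_pos hLpos
  have hMeq : M = Real.log L + sig + lam := by
    rw [hMdef, Real.log_div (ne_of_gt hLpos) (by positivity),
      Real.log_mul (ne_of_gt hs0) (ne_of_gt hδ0), hsigdef, hlamdef,
      one_div, one_div, Real.log_inv, Real.log_inv]
    ring
  have hMlam : lam ≤ M := by rw [hMeq]; linarith only [hlogL0, hsig0]
  have hMpos : 0 < M := by linarith only [hMlam, hlampos]
  have hM138 : (1.38:ℝ) ≤ M := le_trans hlam hMlam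
  -- T bound in product form
  have hT' : (7.4e5:ℝ) * L * M ≤ E2 * (T:ℝ) := by
    have h1 : (7.4e5:ℝ) * L * M * (1/E2) * E2 ≤ (T:ℝ) * E2 :=
      mul_le_mul_of_nonneg_right hT (le_of_lt hE2pos)
    have h2 : (7.4e5:ℝ) * L * M * (1/E2) * E2 = 7.4e5 * L * M := by
      field_simp
    nlinarith only [h1, h2]
  -- w, w0
  set w := E2 * (T:ℝ) / lam with hwdef
  set w0 := (7.4e5:ℝ) * L * M / lam with hw0def
  clear_value w w0
  have hw0w : w0 ≤ w := by
    rw [hwdef, hw0def]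
    gcongr
  have hlamw : lam * w = E2 * (T:ℝ) := by
    rw [hwdef]; field_simp
  have hlamw0 : lam * w0 = 7.4e5 * L * M := by
    rw [hw0def]; field_simp
  have hLMlam : lam ≤ L * M := by
    calc lam ≤ M := hMlam
      _ = 1 * M := (one_mul M).symm
      _ ≤ L * M := mul_le_mul_of_nonneg_right hL1 (le_of_lt hMpos)
  have hw0ge : (7.4e5:ℝ) ≤ w0 := by
    rw [hw0def, le_div_iff₀ hlampos]
    nlinarith only [hLMlam]
  have hw0pos : 0 < w0 := by linarith only [hw0ge]
  have hwpos : 0 < w := by linarith only [hw0pos, hw0w]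
  -- lower bound on log w0
  have hlogw0low : (13.1:ℝ) ≤ Real.log w0 := by
    have h1 : Real.log ((2:ℝ)^(19:ℕ)) ≤ Real.log w0 := by
      apply Real.log_le_log (by norm_num)
      norm_num
      linarith only [hw0ge]
    rw [Real.log_pow] at h1
    push_cast at h1
    linarith only [h1, hlog2a]
  -- upper bound on w0 and log w0
  have hMup : M ≤ 2*L + lam := by
    rw [hMeq]; linarith only [hlogLL, hsigL]
  have hw0up : w0 ≤ 2097152 * L^2 := by
    rw [hw0def, div_le_iff₀ hlampos]
    have := w0up_aux L lam M hL1 hlam hMup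
    linarith only [this]
  have hlogw0up : Real.log w0 ≤ 14.6 + 2 * Real.log L := by
    have h1 : Real.log w0 ≤ Real.log (2097152 * L^2) :=
      Real.log_le_log hw0pos hw0up
    rw [Real.log_mul (by norm_num) (by positivity), Real.log_pow,
      show (2097152:ℝ) = 2^(21:ℕ) by norm_num, Real.log_pow] at h1
    push_cast at h1
    linarith only [h1, hlog2b]
  -- V and t
  set V := (T:ℝ) / lam with hVdef
  clear_value V
  have hVw : V = w / E2 := by rw [hVdef, hwdef]; field_simp
  have hVpos : 0 < V := by rw [hVdef]; positivity
  set t := Real.log V with htdef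
  clear_value t
  have htw : t = Real.log w + ell := by
    rw [htdef, hVw, Real.log_div (ne_of_gt hwpos) (ne_of_gt hE2pos), helldef,
      one_div, Real.log_inv]
    ring
  set t0 := Real.log w0 + ell with ht0def
  clear_value t0
  have ht0low : (13.1:ℝ) ≤ t0 := by rw [ht0def]; linarith only [hlogw0low, hell0]
  have hlogwlow : Real.log w0 ≤ Real.log w := Real.log_le_log hw0pos hw0w
  have htt0 : t0 ≤ t := by rw [htw, ht0def]; linarith only [hlogwlow]
  have htlow : (13.1:ℝ) ≤ t := le_trans ht0low htt0
  have htpos : 0 < t := by linarith only [htlow]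
  have ht0pos : 0 < t0 := by linarith only [ht0low]
  have ht0up : t0 ≤ 18.3 * L := by
    rw [ht0def]
    linarith only [hlogw0up, hlogLL, hellL, hL1]
  have hlogt0up : Real.log t0 ≤ 3.47 + Real.log L := by
    have h1 : Real.log t0 ≤ Real.log (32 * L) := by
      apply Real.log_le_log ht0pos
      linarith only [ht0up, hL1]
    rw [Real.log_mul (by norm_num) (ne_of_gt hLpos),
      show (32:ℝ) = 2^(5:ℕ) by norm_num, Real.log_pow] at h1
    push_cast at h1
    linarith only [h1, hlog2b]
  have hlogt00 : 0 ≤ Real.log t0 := Real.log_nonneg (by linarith only [ht0low])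
  have hlogt0 : 0 ≤ Real.log t := Real.log_nonneg (by linarith only [htlow])
  -- rho
  set ρ := Real.sqrt (w/w0) with hρdef
  clear_value ρ
  have hρ1 : 1 ≤ ρ := by
    rw [hρdef]
    exact Real.one_le_sqrt.mpr ((one_le_div hw0pos).mpr hw0w)
  have hρsq : ρ^2 = w / w0 := by
    rw [hρdef]
    exact Real.sq_sqrt (by positivity)
  have hwρ : w = w0 * ρ^2 := by rw [hρsq]; field_simp
  set u := ρ - 1 with hudef
  clear_value u
  have hu0 : 0 ≤ u := by rw [hudef]; linarith only [hρ1]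
  have hρu : ρ = 1 + u := by rw [hudef]; ring
  have hρpos : 0 < ρ := by linarith only [hρ1]
  have hlogww0 : Real.log w ≤ Real.log w0 + 2*u := by
    have h1 : Real.log w - Real.log w0 = Real.log (w/w0) :=
      (Real.log_div (ne_of_gt hwpos) (ne_of_gt hw0pos)).symm
    have h2 : Real.log (w/w0) = 2 * Real.log ρ := by
      rw [← hρsq, Real.log_pow]; push_cast; ring
    have h3 : Real.log ρ ≤ ρ - 1 := Real.log_le_sub_one_of_pos hρpos
    rw [hudef]; linarith only [h1, h2, h3]
  have htup : t ≤ t0 + 2*u := by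
    rw [htw, ht0def]; linarith only [hlogww0]
  have hlogtup : Real.log t ≤ Real.log t0 + (37/232)*u := by
    have h1 : Real.log t ≤ Real.log (t0 + 2*u) :=
      Real.log_le_log htpos htup
    have h2 : Real.log (t0 + 2*u) ≤ Real.log t0 + (2*u)/t0 :=
      log_add_le_aux ht0pos (by linarith only [hu0])
    have h3 : (2*u)/t0 ≤ (37/232)*u := by
      rw [div_le_iff₀ ht0pos]
      have h4 := mul_le_mul_of_nonneg_left ht0low hu0
      nlinarith only [h4, hu0]
    linarith only [h1, h2, h3]
  -- the master inequality
  set C0 := 232*lam + 232*sig + 232*Real.log t0 + 660 with hC0def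
  clear_value C0
  have hC0low : (900:ℝ) ≤ C0 := by
    rw [hC0def]; linarith only [hlam, hsig0, hlogt00]
  have hC0up : C0 ≤ 1300 * M := by
    rw [hC0def]
    have h1 : 232*Real.log t0 ≤ 232*(3.47 + Real.log L) := by
      linarith only [hlogt0up]
    linarith only [h1, hMeq, hM138]
  set F := 232*lam + 232*sig + 232*Real.log t + 660 with hFdef
  clear_value F
  have hF0 : 0 ≤ F := by
    rw [hFdef]; linarith only [hlam, hsig0, hlogt0]
  have hFup : F ≤ C0 + 37*u := by
    rw [hFdef, hC0def]; linarith only [hlogtup]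
  have hprod : t * F ≤ (t0 + 2*u) * (C0 + 37*u) :=
    mul_le_mul htup hFup hF0 (by linarith only [ht0low, hu0])
  have hA : (t0 + 2*u) * (C0 + 37*u) ≤ (6/5) * (t0 * C0) * (1+u)^2 :=
    quad_aux t0 C0 u (by linarith only [ht0low]) hC0low hu0
  have hB : (6/5) * (t0 * C0) ≤ 7.4e5 * L * M := by
    have h1 : t0 * C0 ≤ (18.3*L) * (1300*M) := by
      apply mul_le_mul ht0up hC0up (by linarith only [hC0low]) (by linarith only [hL1])
    have h2 : (0:ℝ) ≤ L*M := le_of_lt (mul_pos hLpos hMpos)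
    nlinarith only [h1, h2]
  have hmaster : t * F ≤ lam * w := by
    have h1 : (6/5) * (t0 * C0) * (1+u)^2 ≤ (7.4e5 * L * M) * (1+u)^2 :=
      mul_le_mul_of_nonneg_right hB (sq_nonneg _)
    have h2 : lam * w = (7.4e5 * L * M) * (1+u)^2 := by
      rw [hwρ, ← hρu, ← mul_assoc, hlamw0]
    linarith only [hprod, hA, h1, h2]
  -- step 7 : the Dbar inequality
  set Db := (t / Real.log 2) * (5/s) with hDbdef
  clear_value Db
  have hDbpos : 0 < Db := by
    rw [hDbdef]
    exact mul_pos (div_pos htpos hlog2pos) (div_pos (by norm_num) hs0)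
  have hsDb : s * Db = 5 * t / Real.log 2 := by
    rw [hDbdef]; field_simp
  have h2Db : 2 * Db = (10 / Real.log 2) * (t * (1/s)) := by
    rw [hDbdef]; field_simp; ring
  have hinvs : (1:ℝ) ≤ 1/s := by
    rw [le_div_iff₀ hs0]; linarith only [hs1]
  have hlog2Db : Real.log (2*Db) ≤ 2.78 + sig + Real.log t := by
    rw [h2Db, Real.log_mul (ne_of_gt (div_pos (by norm_num) hlog2pos))
        (ne_of_gt (mul_pos htpos (by positivity))),
      Real.log_mul (ne_of_gt htpos) (by positivity)]
    have h1 : Real.log (10 / Real.log 2) ≤ Real.log 16 := by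
      apply Real.log_le_log (by positivity)
      rw [div_le_iff₀ hlog2pos]; linarith only [hlog2a]
    have h2 : Real.log 16 = 4 * Real.log 2 := by
      rw [show (16:ℝ) = 2^(4:ℕ) by norm_num, Real.log_pow]; push_cast; ring
    have h3 : Real.log (1/s) = sig := hsigdef.symm
    linarith only [h1, h2, h3, hlog2b]
  have hlog2Db0 : 0 ≤ Real.log (2*Db) := by
    apply Real.log_nonneg
    rw [h2Db]
    have h2 : (10:ℝ) ≤ 10/Real.log 2 := by
      rw [le_div_iff₀ hlog2pos]; nlinarith only [hlog2b, hlog2pos]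
    have h3 : (1:ℝ) ≤ t * (1/s) := by
      calc (1:ℝ) ≤ t := by linarith only [htlow]
        _ = t * 1 := (mul_one t).symm
        _ ≤ t * (1/s) := mul_le_mul_of_nonneg_left hinvs (le_of_lt htpos)
    calc (1:ℝ) ≤ 10 * (t * (1/s)) := by nlinarith only [h3]
      _ ≤ (10/Real.log 2) * (t * (1/s)) :=
        mul_le_mul_of_nonneg_right h2 (by linarith only [h3])
  have hq : 5 * t / Real.log 2 ≤ 7.25 * t := by
    rw [div_le_iff₀ hlog2pos]
    have h1 := mul_le_mul_of_nonneg_left (le_of_lt hlog2a) (le_of_lt htpos)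
    nlinarith only [h1, htpos]
  have hq0 : 0 ≤ 5 * t / Real.log 2 :=
    div_nonneg (by linarith only [htpos]) (le_of_lt hlog2pos)
  have hcDb0 : 0 ≤ Real.log (2*Db) + lam := by linarith only [hlog2Db0, hlampos]
  have hstep7s : s * (Δ^2 * Db + 32 * Db * (Real.log (2*Db) + lam)) ≤ s * (Δ^2 * (T:ℝ)) := by
    have h1 : s * (Δ^2 * Db + 32 * Db * (Real.log (2*Db) + lam))
        = Δ^2 * (s*Db) + 32 * (s*Db) * (Real.log (2*Db) + lam) := by ring
    have h2 : Δ^2 * (s*Db) ≤ 7.25 * t := by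
      rw [hsDb]
      calc Δ^2 * (5*t/Real.log 2) ≤ 1 * (5*t/Real.log 2) :=
            mul_le_mul_of_nonneg_right hΔ2le hq0
        _ = 5*t/Real.log 2 := by ring
        _ ≤ 7.25 * t := hq
    have h3 : 32 * (s*Db) * (Real.log (2*Db) + lam) ≤ 232 * t * (Real.log (2*Db) + lam) := by
      apply mul_le_mul_of_nonneg_right ?_ hcDb0
      rw [hsDb]
      linarith only [hq]
    have h4 : 232 * t * (Real.log (2*Db) + lam) ≤ 232 * t * (2.78 + sig + Real.log t + lam) := by
      apply mul_le_mul_of_nonneg_left ?_ (by linarith only [htpos])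
      linarith only [hlog2Db]
    have h5 : 7.25 * t + 232 * t * (2.78 + sig + Real.log t + lam) ≤ t * F := by
      rw [hFdef]; nlinarith only [htpos]
    have h6 : s * (Δ^2 * (T:ℝ)) = E2 * (T:ℝ) := by rw [hE2]; ring
    rw [h1, h6, ← hlamw]
    linarith only [h2, h3, h4, h5, hmaster]
  have hstep7 : Δ^2 * Db + 32 * Db * (Real.log (2*Db) + lam) ≤ Δ^2 * (T:ℝ) :=
    le_of_mul_le_mul_left hstep7s hs0
  -- dmax bounds
  have hlogbV : Real.logb 2 V = t / Real.log 2 := by rw [htdef]; rfl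
  have hdmaxR1 : (1:ℝ) ≤ (dmax:ℝ) := by
    have h1 : (1:ℤ) ≤ dmax := by
      rw [hdmax]
      apply Int.le_floor.mpr
      push_cast
      rw [hlogbV, le_div_iff₀ hlog2pos]
      linarith only [hlog2b, htlow]
    exact_mod_cast h1
  have hdmaxup : (dmax:ℝ) ≤ t / Real.log 2 := by
    rw [hdmax, ← hlogbV]
    exact Int.floor_le _
  -- n bounds
  have hrpow : n = (2:ℝ) ^ ((dstar:ℤ):ℝ) := by
    rw [hn, Real.rpow_intCast]
  have hlogb2s : (2:ℝ) ^ (Real.logb 2 (2/s)) = 2/s :=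
    Real.rpow_logb (by norm_num) (by norm_num) (by positivity)
  have hn2s : 2/s ≤ n := by
    rw [hrpow, ← hlogb2s]
    apply (Real.rpow_le_rpow_left_iff (by norm_num : (1:ℝ) < 2)).mpr
    rw [hdstar]; exact Int.le_ceil _
  have hn4s : n ≤ 4/s := by
    have h1 : ((dstar:ℤ):ℝ) ≤ Real.logb 2 (2/s) + 1 := by
      rw [hdstar]; exact le_of_lt (Int.ceil_lt_add_one _)
    have h2 : n ≤ (2:ℝ) ^ (Real.logb 2 (2/s) + 1) := by
      rw [hrpow]
      exact (Real.rpow_le_rpow_left_iff (by norm_num : (1:ℝ) < 2)).mpr h1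
    rw [Real.rpow_add (by norm_num), Real.rpow_one, hlogb2s] at h2
    calc n ≤ 2/s * 2 := h2
      _ = 4/s := by ring
  have hn2 : (2:ℝ) ≤ n := by
    refine le_trans ?_ hn2s
    rw [le_div_iff₀ hs0]; linarith only [hs1]
  have hn1low : (3:ℝ) ≤ n + 1 := by linarith only [hn2]
  have hn1up : n + 1 ≤ 5/s := by
    have h1 : (5:ℝ)/s - 4/s = 1/s := by ring
    linarith only [h1, hinvs, hn4s]
  -- D
  set D := (dmax:ℝ) * (n+1) with hDdef
  clear_value D
  have hD3 : (3:ℝ) ≤ D := by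
    rw [hDdef]
    calc (3:ℝ) = 1 * 3 := by norm_num
      _ ≤ (dmax:ℝ) * (n+1) :=
        mul_le_mul hdmaxR1 hn1low (by norm_num) (by linarith only [hdmaxR1])
  have hDpos : 0 < D := by linarith only [hD3]
  have hDDb : D ≤ Db := by
    rw [hDdef, hDbdef]
    exact mul_le_mul hdmaxup hn1up (by linarith only [hn1low])
      (div_nonneg (by linarith only [htpos]) (le_of_lt hlog2pos))
  have hlog2D0 : 0 ≤ Real.log (2*D) := Real.log_nonneg (by linarith only [hD3])
  have hcD0 : 0 ≤ Real.log (2*D) + lam := by linarith only [hlog2D0, hlampos]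
  have hG : Δ^2 * D + 32 * D * (Real.log (2*D) + lam) ≤ Δ^2 * (T:ℝ) := by
    have h1 : Real.log (2*D) ≤ Real.log (2*Db) := by
      apply Real.log_le_log (by linarith only [hD3])
      linarith only [hDDb]
    have h2 : Δ^2 * D ≤ Δ^2 * Db :=
      mul_le_mul_of_nonneg_left hDDb (le_of_lt hΔ2pos)
    have h3 : D * (Real.log (2*D) + lam) ≤ Db * (Real.log (2*Db) + lam) :=
      mul_le_mul hDDb (by linarith only [h1]) hcD0 (by linarith only [hDbpos])
    nlinarith only [h2, h3, hstep7]
  -- Goal 1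
  have hDT : D ≤ (T:ℝ) := by
    have h0 : 0 ≤ 32 * D * (Real.log (2*D) + lam) :=
      mul_nonneg (by positivity) hcD0
    have h1 : Δ^2 * D ≤ Δ^2 * (T:ℝ) := by linarith only [hG, h0]
    exact le_of_mul_le_mul_left h1 hΔ2pos
  have hTds1 : 1 ≤ Tds := by
    rw [hTds]
    apply Int.le_floor.mpr
    push_cast
    rw [le_div_iff₀ hDpos]
    linarith only [hDT, hD3]
  refine ⟨hTds1, ?_⟩
  -- Goal 2
  have hTdsRpos : (0:ℝ) < (Tds:ℝ) := by exact_mod_cast hTds1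
  have hTdsfloor : (T:ℝ)/D - 1 ≤ (Tds:ℝ) := by
    rw [hTds]
    exact le_of_lt (Int.sub_one_lt_floor _)
  have hkey : 32 * (Real.log (2*D) + lam) ≤ (Tds:ℝ) * Δ^2 := by
    have h1 : 32 * (Real.log (2*D) + lam) ≤ ((T:ℝ)/D - 1) * Δ^2 := by
      rw [← mul_le_mul_iff_of_pos_right hDpos]
      have h2 : ((T:ℝ)/D - 1) * Δ^2 * D = Δ^2 * (T:ℝ) - Δ^2 * D := by
        field_simp
      rw [h2]
      linarith only [hG]
    have h3 : ((T:ℝ)/D - 1) * Δ^2 ≤ (Tds:ℝ) * Δ^2 :=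
      mul_le_mul_of_nonneg_right hTdsfloor (le_of_lt hΔ2pos)
    linarith only [h1, h3]
  have hcDeq : Real.log (2 * (dmax:ℝ) * (n+1) / δ) = Real.log (2*D) + lam := by
    rw [show 2 * (dmax:ℝ) * (n+1) = 2*D by rw [hDdef]; ring,
      Real.log_div (ne_of_gt (by linarith only [hD3] : (0:ℝ) < 2*D)) (ne_of_gt hδ0),
      hlamdef, one_div, Real.log_inv]
    ring
  set c := Real.log (2*D) + lam with hcdef
  clear_value c
  have h2β : 2 * β = Real.sqrt ((32/(Tds:ℝ)) * c) := by
    rw [hβ, hcDeq, show (32/(Tds:ℝ)) * c = 2^2 * ((8/(Tds:ℝ)) * c) by ring,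
      Real.sqrt_mul (by norm_num : (0:ℝ) ≤ 2^2) ((8/(Tds:ℝ)) * c),
      Real.sqrt_sq (by norm_num : (0:ℝ) ≤ 2)]
  rw [h2β]
  have harg : (32/(Tds:ℝ)) * c ≤ Δ^2 := by
    rw [div_mul_eq_mul_div, div_le_iff₀ hTdsRpos]
    calc 32 * c ≤ (Tds:ℝ) * Δ^2 := hkey
      _ = Δ^2 * (Tds:ℝ) := by ring
  calc Real.sqrt ((32/(Tds:ℝ)) * c) ≤ Real.sqrt (Δ^2) := Real.sqrt_le_sqrt harg
    _ = |Δ| := Real.sqrt_sq_eq_abs Δ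
end

section
/- Let δ ∈ (0, 1/4], let α ≥ 1 be an integer, and let p₀, …, p_{α−1} ∈ [0, 1] and q₀, …, q_{α−1} ∈ (0, 1) be such that (1/α)·∑_{j=0}^{α−1} p_j ≥ 1 − 2δ and (1/α)·∑_{j=0}^{α−1} q_j ≤ 2δ/α. Then kl(1 − 2δ, 2δ/α) ≤ (1/α)·∑_{j=0}^{α−1} kl(p_j, q_j). -/
open Real Finset Set

lemma one_sub_inv_le_log {x : ℝ} (hx : 0 < x) : 1 - x⁻¹ ≤ Real.log x := by
  have h := Real.log_le_sub_one_of_pos (inv_pos.mpr hx)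
  rw [Real.log_inv] at h
  linarith

/-- log-sum inequality. -/
lemma log_sum_ineq (n : ℕ) (a b : ℕ → ℝ) (ha : ∀ j ∈ range n, 0 ≤ a j)
    (hb : ∀ j ∈ range n, 0 < b j) (hn : 0 < n) :
    (∑ j ∈ range n, a j) * Real.log ((∑ j ∈ range n, a j) / (∑ j ∈ range n, b j)) ≤
      ∑ j ∈ range n, a j * Real.log (a j / b j) := by
  set A := ∑ j ∈ range n, a j with hA
  set B := ∑ j ∈ range n, b j with hB
  have hBpos : 0 < B := Finset.sum_pos hb ⟨0, mem_range.mpr hn⟩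
  rcases eq_or_lt_of_le (Finset.sum_nonneg ha) with h0 | hApos
  · have hall : ∀ j ∈ range n, a j = 0 :=
      (Finset.sum_eq_zero_iff_of_nonneg ha).mp h0.symm
    have hA0 : A = 0 := h0.symm
    rw [hA0]
    simp only [zero_mul]
    apply Finset.sum_nonneg
    intro j hj
    rw [hall j hj]; simp
  · have hjensen := Real.convexOn_mul_log.map_centerMass_le
      (t := range n) (w := b) (p := fun j => a j / b j)
      (fun i hi => (hb i hi).le) hBpos
      (fun i hi => div_nonneg (ha i hi) (hb i hi).le)
    simp only [Finset.centerMass] at hjensen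
    have h1 : ∑ i ∈ range n, b i • (a i / b i) = A := by
      rw [hA]
      refine Finset.sum_congr rfl fun i hi => ?_
      rw [smul_eq_mul, mul_div_cancel₀ _ (hb i hi).ne']
    rw [h1, ← hB, smul_eq_mul, ← div_eq_inv_mul] at hjensen
    have h2 : B⁻¹ • ∑ i ∈ range n, b i • ((fun x => x * Real.log x) ∘ fun j => a j / b j) i
        = B⁻¹ * ∑ i ∈ range n, a i * Real.log (a i / b i) := by
      rw [smul_eq_mul]
      congr 1
      refine Finset.sum_congr rfl fun i hi => ?_
      simp only [Function.comp_apply, smul_eq_mul]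
      rw [← mul_assoc, mul_div_cancel₀ _ (hb i hi).ne']
    rw [h2] at hjensen
    have := mul_le_mul_of_nonneg_left hjensen hBpos.le
    calc A * Real.log (A / B) = B * (A / B * Real.log (A / B)) := by
          field_simp
      _ ≤ B * (B⁻¹ * ∑ i ∈ range n, a i * Real.log (a i / b i)) := this
      _ = ∑ i ∈ range n, a i * Real.log (a i / b i) := by
          field_simp

/-- Gibbs: the binary KL divergence is nonnegative. -/
lemma klBin_nonneg {p q : ℝ} (hp : p ∈ Set.Icc (0:ℝ) 1) (hq : q ∈ Set.Ioo (0:ℝ) 1) :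
    0 ≤ klBin p q := by
  obtain ⟨hp0, hp1⟩ := hp
  obtain ⟨hq0, hq1⟩ := hq
  rcases eq_or_lt_of_le hp0 with h0 | hp0'
  · simp only [klBin, ← h0, zero_div, Real.log_zero, mul_zero, zero_add, sub_zero, one_mul]
    rw [Real.log_div one_ne_zero (by linarith), Real.log_one]
    have := Real.log_nonpos (by linarith) (by linarith : (1:ℝ) - q ≤ 1)
    linarith
  rcases eq_or_lt_of_le hp1 with h1 | hp1'
  · simp only [klBin, h1, sub_self, zero_mul, add_zero, one_mul]
    rw [Real.log_div one_ne_zero hq0.ne', Real.log_one]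
    have := Real.log_nonpos hq0.le hq1.le
    linarith
  · have l1 : 1 - (p / q)⁻¹ ≤ Real.log (p / q) :=
      one_sub_inv_le_log (div_pos hp0' hq0)
    have l2 : 1 - ((1 - p) / (1 - q))⁻¹ ≤ Real.log ((1 - p) / (1 - q)) :=
      one_sub_inv_le_log (div_pos (by linarith) (by linarith))
    have e1 : (p / q)⁻¹ = q / p := by rw [inv_div]
    have e2 : ((1 - p) / (1 - q))⁻¹ = (1 - q) / (1 - p) := by rw [inv_div]
    rw [e1] at l1; rw [e2] at l2
    have k1 : p * (1 - q / p) = p - q := by field_simp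
    have k2 : (1 - p) * (1 - (1 - q) / (1 - p)) = q - p := by
      have h : (1:ℝ) - p ≠ 0 := by linarith
      field_simp
      ring
    have t1 : p - q ≤ p * Real.log (p / q) := by
      rw [← k1]; exact mul_le_mul_of_nonneg_left l1 hp0'.le
    have t2 : q - p ≤ (1 - p) * Real.log ((1 - p) / (1 - q)) := by
      rw [← k2]; exact mul_le_mul_of_nonneg_left l2 (by linarith)
    unfold klBin; linarith

/-- `klBin p ·` is antitone on `(0, p]`. -/
lemma klBin_anti_q {p a b : ℝ} (ha : 0 < a) (hab : a ≤ b) (hbp : b ≤ p) (hp1 : p ≤ 1)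
    (hb1 : b < 1) : klBin p b ≤ klBin p a := by
  have hb0 : 0 < b := lt_of_lt_of_le ha hab
  have hp0 : 0 < p := lt_of_lt_of_le hb0 hbp
  have ha1 : a < 1 := lt_of_le_of_lt hab hb1
  -- key identity
  have key : klBin p a - klBin p b
      = p * (Real.log b - Real.log a) + (1 - p) * (Real.log (1 - b) - Real.log (1 - a)) := by
    rcases eq_or_lt_of_le hp1 with h1 | hp1'
    · simp only [klBin, h1, sub_self, zero_mul, add_zero, one_mul]
      rw [Real.log_div one_ne_zero ha.ne', Real.log_div one_ne_zero hb0.ne', Real.log_one]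
      ring
    · unfold klBin
      rw [Real.log_div hp0.ne' ha.ne', Real.log_div hp0.ne' hb0.ne',
        Real.log_div (by linarith : (1:ℝ) - p ≠ 0) (by linarith : (1:ℝ) - a ≠ 0),
        Real.log_div (by linarith : (1:ℝ) - p ≠ 0) (by linarith : (1:ℝ) - b ≠ 0)]
      ring
  have l1 : 1 - a / b ≤ Real.log b - Real.log a := by
    have := one_sub_inv_le_log (div_pos hb0 ha)
    rw [inv_div, Real.log_div hb0.ne' ha.ne'] at this
    linarith
  have l2 : 1 - (1 - a) / (1 - b) ≤ Real.log (1 - b) - Real.log (1 - a) := by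
    have := one_sub_inv_le_log (div_pos (by linarith : (0:ℝ) < 1 - b) (by linarith : (0:ℝ) < 1 - a))
    rw [inv_div, Real.log_div (by linarith : (1:ℝ) - b ≠ 0) (by linarith : (1:ℝ) - a ≠ 0)] at this
    linarith
  have hbb : (0:ℝ) < b * (1 - b) := mul_pos hb0 (by linarith)
  have k : p * (1 - a / b) + (1 - p) * (1 - (1 - a) / (1 - b))
      = (b - a) * (p - b) / (b * (1 - b)) := by
    have h1 : b ≠ 0 := hb0.ne'
    have h2 : (1:ℝ) - b ≠ 0 := by linarith
    rw [eq_div_iff hbb.ne']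
    field_simp
    ring
  have hnn : 0 ≤ (b - a) * (p - b) / (b * (1 - b)) :=
    div_nonneg (mul_nonneg (by linarith) (by linarith)) hbb.le
  have t1 : p * (1 - a / b) ≤ p * (Real.log b - Real.log a) :=
    mul_le_mul_of_nonneg_left l1 hp0.le
  have t2 : (1 - p) * (1 - (1 - a) / (1 - b)) ≤ (1 - p) * (Real.log (1 - b) - Real.log (1 - a)) :=
    mul_le_mul_of_nonneg_left l2 (by linarith)
  linarith

/-- `klBin · q` is convex on `[0,1]`. -/
lemma klBin_convex {q : ℝ} (hq : q ∈ Set.Ioo (0:ℝ) 1) :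
    ConvexOn ℝ (Set.Icc (0:ℝ) 1) (fun x => klBin x q) := by
  obtain ⟨hq0, hq1⟩ := hq
  have g1 : ConvexOn ℝ (Set.Icc (0:ℝ) 1) (fun x => x * Real.log x) :=
    Real.convexOn_mul_log.subset Set.Icc_subset_Ici_self (convex_Icc 0 1)
  have g2 : ConvexOn ℝ (Set.Icc (0:ℝ) 1) (fun x => (1 - x) * Real.log (1 - x)) := by
    refine ⟨convex_Icc 0 1, fun x hx y hy s t hs ht hst => ?_⟩
    have hx' : (1:ℝ) - x ∈ Set.Icc (0:ℝ) 1 := ⟨by linarith [hx.2], by linarith [hx.1]⟩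
    have hy' : (1:ℝ) - y ∈ Set.Icc (0:ℝ) 1 := ⟨by linarith [hy.2], by linarith [hy.1]⟩
    have h := g1.2 hx' hy' hs ht hst
    have key : s • (1 - x) + t • (1 - y) = 1 - (s • x + t • y) := by
      simp only [smul_eq_mul]; linear_combination hst
    rw [key] at h
    simpa using h
  have g3 : ConvexOn ℝ (Set.Icc (0:ℝ) 1)
      (fun x => x * (-Real.log q) + (1 - x) * (-Real.log (1 - q))) := by
    refine ⟨convex_Icc 0 1, fun x hx y hy s t hs ht hst => ?_⟩
    simp only [smul_eq_mul]
    exact le_of_eq (by linear_combination Real.log (1 - q) * hst)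
  have G := (g1.add g2).add g3
  refine G.congr fun x hx => ?_
  simp only [klBin, Pi.add_apply]
  have e1 : x * Real.log (x / q) = x * Real.log x + x * (-Real.log q) := by
    rcases eq_or_lt_of_le hx.1 with h0 | h0
    · simp [← h0]
    · rw [Real.log_div h0.ne' hq0.ne']; ring
  have e2 : (1 - x) * Real.log ((1 - x) / (1 - q))
      = (1 - x) * Real.log (1 - x) + (1 - x) * (-Real.log (1 - q)) := by
    rcases eq_or_lt_of_le hx.2 with h1 | h1
    · simp [h1]
    · rw [Real.log_div (by linarith : (1:ℝ) - x ≠ 0) (by linarith : (1:ℝ) - q ≠ 0)]; ring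
  rw [e1, e2]; ring

lemma klBin_self {q : ℝ} (hq0 : q ≠ 0) (hq1 : q ≠ 1) : klBin q q = 0 := by
  simp [klBin, div_self hq0, div_self (sub_ne_zero.mpr (Ne.symm hq1))]

/-- `klBin · q` is monotone on `[q, 1]`. -/
lemma klBin_mono_p {q a b : ℝ} (hq : q ∈ Set.Ioo (0:ℝ) 1) (hqa : q ≤ a) (hab : a ≤ b)
    (hb1 : b ≤ 1) : klBin a q ≤ klBin b q := by
  rcases eq_or_lt_of_le (hqa.trans hab) with hqb | hqb
  · have haq : a = q := le_antisymm (hab.trans hqb.symm.le) hqa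
    rw [haq, ← hqb]
  · set s : ℝ := (b - a) / (b - q) with hs
    set t : ℝ := (a - q) / (b - q) with ht
    have hbq : 0 < b - q := by linarith
    have hs0 : 0 ≤ s := div_nonneg (by linarith) hbq.le
    have ht0 : 0 ≤ t := div_nonneg (by linarith) hbq.le
    have hst : s + t = 1 := by
      rw [hs, ht, ← add_div, show b - a + (a - q) = b - q by ring, div_self hbq.ne']
    have hcomb : s * q + t * b = a := by
      rw [hs, ht]; field_simp; ring
    have hconv := (klBin_convex hq).2 ⟨hq.1.le, hq.2.le⟩ ⟨hq.1.le.trans (hqa.trans hab), hb1⟩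
      hs0 ht0 hst
    simp only [smul_eq_mul] at hconv
    rw [hcomb, klBin_self hq.1.ne' hq.2.ne] at hconv
    have hnn : 0 ≤ klBin b q := klBin_nonneg ⟨hq.1.le.trans (hqa.trans hab), hb1⟩ hq
    calc klBin a q ≤ s * 0 + t * klBin b q := hconv
      _ ≤ klBin b q := by nlinarith [hst]

/-- by joint convexity and monotonicity of the binary KL
divergence, `kl(1−2δ, 2δ/α)` lower-bounds the average of the `kl(p_j, q_j)`. -/
theorem stmt_14 (δ : ℝ) (hδ : δ ∈ Set.Ioc (0:ℝ) (1/4)) (α : ℕ) (hα : 1 ≤ α)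
    (p q : ℕ → ℝ)
    (hp : ∀ j ∈ Finset.range α, p j ∈ Set.Icc (0:ℝ) 1)
    (hq : ∀ j ∈ Finset.range α, q j ∈ Set.Ioo (0:ℝ) 1)
    (hpavg : 1 - 2 * δ ≤ (1 / (α : ℝ)) * ∑ j ∈ Finset.range α, p j)
    (hqavg : (1 / (α : ℝ)) * ∑ j ∈ Finset.range α, q j ≤ 2 * δ / (α : ℝ)) :
    klBin (1 - 2 * δ) (2 * δ / (α : ℝ)) ≤
      (1 / (α : ℝ)) * ∑ j ∈ Finset.range α, klBin (p j) (q j) := by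
  obtain ⟨hδ0, hδ4⟩ := hδ
  have hα0 : (0:ℝ) < (α:ℝ) := by exact_mod_cast Nat.pos_of_ne_zero (by omega)
  have hα1 : (1:ℝ) ≤ (α:ℝ) := by exact_mod_cast hα
  set A := (α:ℝ)
  set P := ∑ j ∈ Finset.range α, p j with hP
  set Q := ∑ j ∈ Finset.range α, q j with hQ
  set pb := P / A with hpb
  set qb := Q / A with hqb
  -- basic bounds
  have hQ0 : 0 < Q := Finset.sum_pos (fun j hj => (hq j hj).1) ⟨0, mem_range.mpr (by omega)⟩
  have hP1 : P ≤ A := by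
    calc P ≤ ∑ _j ∈ Finset.range α, (1:ℝ) := Finset.sum_le_sum fun j hj => (hp j hj).2
      _ = A := by simp [A]
  have hpb1 : pb ≤ 1 := by rw [hpb]; exact div_le_one_of_le₀ hP1 hα0.le
  have hpblow : 1 - 2 * δ ≤ pb := by
    rw [hpb, div_eq_inv_mul, ← one_div]; exact hpavg
  have hqb0 : 0 < qb := div_pos hQ0 hα0
  have hqbup : qb ≤ 2 * δ / A := by
    rw [hqb, div_eq_inv_mul, ← one_div]; exact hqavg
  have hδA : 2 * δ / A ≤ 2 * δ := by
    rw [div_le_iff₀ hα0]; nlinarith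
  have hδA0 : 0 < 2 * δ / A := by positivity
  have hδA1 : 2 * δ / A < 1 := by
    calc 2 * δ / A ≤ 2 * δ := hδA
      _ < 1 := by linarith
  have hqbpb : 2 * δ / A ≤ pb := by
    calc 2 * δ / A ≤ 2 * δ := hδA
      _ ≤ 1 - 2 * δ := by linarith
      _ ≤ pb := hpblow
  -- Step A: joint convexity
  have stepA : klBin pb qb ≤ (1 / A) * ∑ j ∈ Finset.range α, klBin (p j) (q j) := by
    have hA' : A ≠ 0 := hα0.ne'
    have hQ' : Q ≠ 0 := hQ0.ne'
    have hQ2 : Q ≤ 2 * δ := by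
      have := mul_le_mul_of_nonneg_left hqavg hα0.le
      rw [one_div, ← mul_assoc, mul_inv_cancel₀ hA', one_mul] at this
      calc Q ≤ A * (2 * δ / A) := this
        _ = 2 * δ := by field_simp
    have hAQ : (0:ℝ) < A - Q := by nlinarith
    have hsum : ∑ j ∈ Finset.range α, klBin (p j) (q j)
        = (∑ j ∈ Finset.range α, p j * Real.log (p j / q j))
          + ∑ j ∈ Finset.range α, (1 - p j) * Real.log ((1 - p j) / (1 - q j)) := by
      rw [← Finset.sum_add_distrib]; rfl
    have ls1 := log_sum_ineq α p q (fun j hj => (hp j hj).1) (fun j hj => (hq j hj).1)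
      (by omega)
    have ls2 := log_sum_ineq α (fun j => 1 - p j) (fun j => 1 - q j)
      (fun j hj => show (0:ℝ) ≤ 1 - p j by linarith [(hp j hj).2])
      (fun j hj => show (0:ℝ) < 1 - q j by linarith [(hq j hj).2])
      (by omega)
    have e1 : ∑ j ∈ Finset.range α, (1 - p j) = A - P := by
      rw [Finset.sum_sub_distrib]; simp [hP, A]
    have e2 : ∑ j ∈ Finset.range α, (1 - q j) = A - Q := by
      rw [Finset.sum_sub_distrib]; simp [hQ, A]
    have d1 : pb / qb = P / Q := by
      rw [hpb, hqb, div_div_div_comm, div_self hA', div_one]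
    have h1 : 1 - pb = (A - P) / A := by rw [hpb]; field_simp
    have h2 : 1 - qb = (A - Q) / A := by rw [hqb]; field_simp
    have d2 : (1 - pb) / (1 - qb) = (A - P) / (A - Q) := by
      rw [h1, h2, div_div_div_comm, div_self hA', div_one]
    have e3 : A * pb = P := by rw [hpb]; field_simp
    have e4 : A * (1 - pb) = A - P := by rw [h1]; field_simp
    have rAll : A * klBin pb qb
        = P * Real.log (P / Q) + (A - P) * Real.log ((A - P) / (A - Q)) := by
      unfold klBin
      rw [d1, d2]
      linear_combination Real.log (P / Q) * e3 + Real.log ((A - P) / (A - Q)) * e4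
    have hle : A * klBin pb qb ≤ ∑ j ∈ Finset.range α, klBin (p j) (q j) := by
      rw [rAll, hsum]
      refine add_le_add ?_ ?_
      · exact ls1
      · calc (A - P) * Real.log ((A - P) / (A - Q))
            = (∑ j ∈ Finset.range α, (1 - p j)) * Real.log
              ((∑ j ∈ Finset.range α, (1 - p j)) / (∑ j ∈ Finset.range α, (1 - q j))) := by
              rw [e1, e2]
          _ ≤ ∑ j ∈ Finset.range α, (1 - p j) * Real.log ((1 - p j) / (1 - q j)) := ls2
    rw [one_div, ← div_eq_inv_mul, le_div_iff₀ hα0, mul_comm]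
    exact hle
  -- Step B: antitone in q
  have stepB : klBin pb (2 * δ / A) ≤ klBin pb qb :=
    klBin_anti_q hqb0 hqbup hqbpb hpb1 hδA1
  -- Step C: monotone in p
  have stepC : klBin (1 - 2 * δ) (2 * δ / A) ≤ klBin pb (2 * δ / A) :=
    klBin_mono_p ⟨hδA0, hδA1⟩ (by linarith [hδA]) hpblow hpb1
  linarith
end

section
/- Let c ≥ 223, let δ ∈ (0, 1/2), let M ≥ 1 be an integer, and let Δ ∈ (0, 1]. Define k = ⌈ log₂( c · log( M · max(log(1/Δ²), 1) / δ ) / Δ² ) ⌉. Then (32 / (9·2^k)) · log( π² · M · k² / (3δ) ) ≤ Δ². -/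
set_option maxHeartbeats 1000000 in
/-- choice of the round index `k` in `EstimateJumps` which makes
the Hoeffding-type threshold fall below `Δ²`. -/
theorem stmt_15 (c δ Δ : ℝ) (hc : 223 ≤ c) (hδ : δ ∈ Set.Ioo (0:ℝ) (1/2))
    (M : ℕ) (hM : 1 ≤ M) (hΔ : Δ ∈ Set.Ioc (0:ℝ) 1)
    (k : ℤ) (hk : k = ⌈Real.logb 2
      (c * Real.log ((M : ℝ) * max (Real.log (1 / Δ ^ 2)) 1 / δ) / Δ ^ 2)⌉) :
    (32 / (9 * (2 : ℝ) ^ k)) *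
      Real.log (Real.pi ^ 2 * (M : ℝ) * (k : ℝ) ^ 2 / (3 * δ)) ≤ Δ ^ 2 := by
  obtain ⟨hδ0, hδ2⟩ := hδ
  obtain ⟨hΔ0, hΔ1⟩ := hΔ
  have hM1 : (1:ℝ) ≤ (M:ℝ) := by exact_mod_cast hM
  have hc0 : (0:ℝ) < c := by linarith
  have hΔsq0 : (0:ℝ) < Δ ^ 2 := by positivity
  have hΔsq1 : Δ ^ 2 ≤ 1 := by nlinarith
  have hl2a : Real.log 2 < 0.6931471808 := Real.log_two_lt_d9
  have hl2b : (0.6931471803:ℝ) < Real.log 2 := Real.log_two_gt_d9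
  have hl2pos : (0:ℝ) < Real.log 2 := by linarith
  set m : ℝ := max (Real.log (1 / Δ ^ 2)) 1 with hm
  have hm1 : (1:ℝ) ≤ m := le_max_right _ _
  have hm0 : (0:ℝ) < m := by linarith
  set L : ℝ := Real.log ((M:ℝ) * m / δ) with hLdef
  have harg2 : (2:ℝ) * m ≤ (M:ℝ) * m / δ := by
    rw [le_div_iff₀ hδ0]
    nlinarith
  have harg2' : (2:ℝ) ≤ (M:ℝ) * m / δ := by nlinarith
  have hL2 : Real.log 2 ≤ L := Real.log_le_log (by norm_num) harg2'
  have hL0 : (0:ℝ) < L := lt_of_lt_of_le hl2pos hL2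
  have hlogm : Real.log 2 + Real.log m ≤ L := by
    have h := Real.log_le_log (by positivity) harg2
    rwa [Real.log_mul (by norm_num) (ne_of_gt hm0)] at h
  have hmexp : m ≤ Real.exp L / 2 := by
    have h1 : m = Real.exp (Real.log m) := (Real.exp_log hm0).symm
    have h2 : Real.exp (Real.log m) ≤ Real.exp (L - Real.log 2) :=
      Real.exp_le_exp.mpr (by linarith)
    have h3 : Real.exp (L - Real.log 2) = Real.exp L / 2 := by
      rw [Real.exp_sub, Real.exp_log (by norm_num : (0:ℝ) < 2)]
    rw [h3] at h2; linarith
  have hexpL2 : (2:ℝ) ≤ Real.exp L := by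
    have := Real.exp_le_exp.mpr hL2
    rwa [Real.exp_log (by norm_num : (0:ℝ) < 2)] at this
  have h2L : 2 * L ≤ Real.exp L := by
    have he : Real.exp L = Real.exp (L/2) * Real.exp (L/2) := by
      rw [← Real.exp_add]; ring_nf
    nlinarith [Real.add_one_le_exp (L/2), Real.exp_pos (L/2), sq_nonneg (L/2 - 1)]
  have hlogc2 : (2:ℝ) ≤ Real.log c := by
    rw [Real.le_log_iff_exp_le hc0]
    have he : Real.exp 2 = Real.exp 1 * Real.exp 1 := by rw [← Real.exp_add]; norm_num
    nlinarith [Real.exp_one_lt_d9, Real.exp_pos 1]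
  set A : ℝ := c * L / Δ ^ 2 with hA
  have hA0 : (0:ℝ) < A := by positivity
  have hA1 : (1:ℝ) < A := by
    rw [hA, lt_div_iff₀ hΔsq0]
    nlinarith [mul_nonneg (show (0:ℝ) ≤ c - 223 by linarith) hL0.le]
  have hkA : Real.logb 2 A ≤ (k:ℝ) := by rw [hk]; exact Int.le_ceil _
  have hk1 : 1 ≤ k := by
    have : 0 < k := by
      rw [hk]; exact Int.ceil_pos.mpr (Real.logb_pos one_lt_two hA1)
    omega
  have hk1' : (1:ℝ) ≤ (k:ℝ) := by exact_mod_cast hk1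
  have h2k : A ≤ (2:ℝ) ^ k := by
    calc A = (2:ℝ) ^ (Real.logb 2 A) := (Real.rpow_logb (by norm_num) (by norm_num) hA0).symm
      _ ≤ (2:ℝ) ^ ((k:ℤ):ℝ) := Real.rpow_le_rpow_of_exponent_le one_le_two hkA
      _ = (2:ℝ) ^ k := Real.rpow_intCast 2 k
  clear_value m L A
  -- bound on log A
  have hlogA : Real.log A ≤ Real.log c + Real.exp L := by
    have h1 : Real.log A = Real.log c + Real.log L - Real.log (Δ^2) := by
      rw [hA, Real.log_div (by positivity) (ne_of_gt hΔsq0),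
        Real.log_mul (ne_of_gt hc0) (ne_of_gt hL0)]
    have h2 : -Real.log (Δ^2) ≤ m := by
      have he : Real.log (1 / Δ ^ 2) = -Real.log (Δ^2) := by
        rw [one_div, Real.log_inv]
      rw [hm, ← he]
      exact le_max_left _ _
    have h3 : Real.log L ≤ L := Real.log_le_self hL0.le
    linarith
  -- bound on k
  have hkup : (k:ℝ) ≤ 3 * Real.log c * Real.exp L := by
    have h1 : (k:ℝ) < Real.logb 2 A + 1 := by rw [hk]; exact Int.ceil_lt_add_one _
    have h2 : Real.logb 2 A = Real.log A / Real.log 2 := (Real.log_div_log).symm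
    have h3 : (k:ℝ) < (Real.log A + Real.log 2) / Real.log 2 := by
      have hsplit : (Real.log A + Real.log 2)/Real.log 2 = Real.log A / Real.log 2 + 1 := by
        rw [add_div, div_self (ne_of_gt hl2pos)]
      rw [hsplit]; rw [h2] at h1; exact h1
    rw [lt_div_iff₀ hl2pos] at h3
    have h5 : (k:ℝ) * Real.log 2 ≤ (3 * Real.log c * Real.exp L) * Real.log 2 := by
      nlinarith [mul_nonneg (show (0:ℝ) ≤ Real.log c - 2 by linarith)
        (show (0:ℝ) ≤ Real.exp L - 2 by linarith),
        mul_nonneg (show (0:ℝ) ≤ Real.log c - 2 by linarith) hl2pos.le,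
        mul_nonneg (show (0:ℝ) ≤ Real.exp L - 2 by linarith) hl2pos.le,
        mul_nonneg (mul_nonneg (show (0:ℝ) ≤ Real.log c - 2 by linarith)
          (show (0:ℝ) ≤ Real.exp L - 2 by linarith)) hl2pos.le]
    exact le_of_mul_le_mul_right h5 hl2pos
  have hlog4 : Real.log 4 = 2 * Real.log 2 := by
    rw [show (4:ℝ) = 2^2 by norm_num, Real.log_pow]; norm_num
  have hlogk : Real.log (k:ℝ) ≤ Real.log 3 + Real.log (Real.log c) + L := by
    have h1 : Real.log (k:ℝ) ≤ Real.log (3 * Real.log c * Real.exp L) :=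
      Real.log_le_log (by linarith) hkup
    rwa [Real.log_mul (by positivity) (ne_of_gt (Real.exp_pos L)),
      Real.log_mul (by norm_num) (by nlinarith), Real.log_exp] at h1
  have hlog3 : Real.log 3 ≤ 2 * Real.log 2 := by
    have := Real.log_le_log (show (0:ℝ) < 3 by norm_num) (show (3:ℝ) ≤ 4 by norm_num)
    linarith
  have hloglogc : Real.log (Real.log c) ≤ Real.log c := Real.log_le_self (by linarith)
  have hlogcup : Real.log c ≤ 8 * Real.log 2 + c/223 - 1 := by
    have h1 : Real.log (c/223) ≤ c/223 - 1 := Real.log_le_sub_one_of_pos (by positivity)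
    have h2 : Real.log (c/223) = Real.log c - Real.log 223 :=
      Real.log_div (ne_of_gt hc0) (by norm_num)
    have h3 : Real.log 223 ≤ Real.log 256 :=
      Real.log_le_log (by norm_num) (by norm_num)
    have h4 : Real.log 256 = 8 * Real.log 2 := by
      rw [show (256:ℝ) = 2^8 by norm_num, Real.log_pow]; norm_num
    linarith
  -- decompose log P
  have hπ : Real.pi < 3.15 := Real.pi_lt_d2
  have hπ3 : (3:ℝ) < Real.pi := Real.pi_gt_three
  have hksq0 : (0:ℝ) < (k:ℝ)^2 := by positivity
  have hMδ : (0:ℝ) < (M:ℝ)/δ := div_pos (by linarith) hδ0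
  have hPdec : Real.log (Real.pi ^ 2 * (M : ℝ) * (k : ℝ) ^ 2 / (3 * δ)) =
      Real.log (Real.pi^2/3) + Real.log ((M:ℝ)/δ) + 2 * Real.log (k:ℝ) := by
    rw [show Real.pi ^ 2 * (M : ℝ) * (k : ℝ) ^ 2 / (3 * δ)
        = (Real.pi^2/3) * ((M:ℝ)/δ) * ((k:ℝ)^2) by field_simp]
    rw [Real.log_mul (by positivity) (ne_of_gt hksq0),
      Real.log_mul (by positivity) (ne_of_gt hMδ), Real.log_pow]
    push_cast; ring
  have hb1 : Real.log (Real.pi^2/3) ≤ 2 * Real.log 2 := by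
    have := Real.log_le_log (show (0:ℝ) < Real.pi^2/3 by positivity)
      (show Real.pi^2/3 ≤ 4 by nlinarith)
    linarith
  have hb1' : (0:ℝ) ≤ Real.log (Real.pi^2/3) := Real.log_nonneg (by nlinarith)
  have hb2 : Real.log ((M:ℝ)/δ) ≤ L := by
    rw [hLdef]
    apply Real.log_le_log hMδ
    rw [div_le_div_iff₀ hδ0 hδ0]
    nlinarith [mul_nonneg (mul_nonneg (show (0:ℝ) ≤ (M:ℝ) by linarith) hδ0.le)
      (show (0:ℝ) ≤ m - 1 by linarith)]
  have hb2' : (0:ℝ) ≤ Real.log ((M:ℝ)/δ) := by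
    apply Real.log_nonneg
    rw [le_div_iff₀ hδ0]; nlinarith
  have hb3' : (0:ℝ) ≤ Real.log (k:ℝ) := Real.log_nonneg hk1'
  have hlogP0 : (0:ℝ) ≤ Real.log (Real.pi ^ 2 * (M : ℝ) * (k : ℝ) ^ 2 / (3 * δ)) := by
    rw [hPdec]; linarith
  -- key bound
  have key : Real.log (Real.pi ^ 2 * (M : ℝ) * (k : ℝ) ^ 2 / (3 * δ)) ≤ 9*c/32 * L := by
    rw [hPdec]
    have hq1 : (0:ℝ) ≤ (9*c/32 - 3) * (L - Real.log 2) :=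
      mul_nonneg (by linarith) (by linarith)
    have hq2 : (0:ℝ) ≤ c * (Real.log 2 - 0.6931471803) :=
      mul_nonneg hc0.le (by linarith)
    linarith [hq1, hq2]
  -- finish
  have h2kpos : (0:ℝ) < (2:ℝ) ^ k := by positivity
  rw [div_mul_eq_mul_div, div_le_iff₀ (by positivity)]
  have hfin : 9 * (c * L) ≤ Δ^2 * (9 * (2:ℝ)^k) := by
    have h := mul_le_mul_of_nonneg_left h2k hΔsq0.le
    have heq : Δ^2 * A = c * L := by rw [hA]; field_simp
    rw [heq] at h
    linarith
  linarith [key]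
end
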